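/- Let Z be a d×d positive semidefinite real symmetric matrix with Z ≠ 0, and let φ : ℝ → ℝ be convex. Then trace(φ(Z)) ≤ intdim(Z)·φ(‖Z‖) + (d − intdim(Z))·φ(0), where intdim(Z) = trace(Z)/‖Z‖. -/

import Mathlib

/-!
Diagonalise `Z`: the trace of `φ(Z)` is `∑ φ(λᵢ)` over the eigenvalues `λᵢ ∈ [0, ‖Z‖]`. On that
interval a convex `φ` lies below its chord, `φ(λ) ≤ (λ/‖Z‖) φ(‖Z‖) + (1 - λ/‖Z‖) φ(0)`, and
summing the chord bounds turns `∑ λᵢ / ‖Z‖` into `intdim(Z)`.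
-/

open Matrix

/-- Applying a scalar function to a real symmetric matrix through its spectral
decomposition. -/
noncomputable def matFun {d : ℕ} (φ : ℝ → ℝ) (M : Matrix (Fin d) (Fin d) ℝ)
    (hM : M.IsHermitian) : Matrix (Fin d) (Fin d) ℝ :=
  (hM.eigenvectorUnitary : Matrix (Fin d) (Fin d) ℝ) * diagonal (φ ∘ hM.eigenvalues) *
    star (hM.eigenvectorUnitary : Matrix (Fin d) (Fin d) ℝ)

/-- Largest eigenvalue of a real symmetric matrix (the spectral norm for `Z ⪰ 0`). -/
noncomputable def lamMax {d : ℕ} {M : Matrix (Fin d) (Fin d) ℝ}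
    (hM : M.IsHermitian) : ℝ :=
  ⨆ i, hM.eigenvalues i

section Chord

variable {s : Set ℝ} {φ : ℝ → ℝ} {L : ℝ}

theorem ConvexOn.le_chord_zero (hφ : ConvexOn ℝ s φ) (h0 : 0 ∈ s) (hLs : L ∈ s) (hL : 0 < L)
    {x : ℝ} (hx : x ∈ Set.Icc 0 L) :
    φ x ≤ x / L * φ L + (1 - x / L) * φ 0 := by
  have ht0 : 0 ≤ x / L := div_nonneg hx.1 hL.le
  have ht1 : x / L ≤ 1 := (div_le_one hL).mpr hx.2
  have h := hφ.2 hLs h0 ht0 (sub_nonneg.mpr ht1) (add_sub_cancel _ _)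
  rwa [smul_eq_mul, smul_eq_mul, smul_eq_mul, smul_eq_mul, mul_zero, add_zero,
    div_mul_cancel₀ _ hL.ne'] at h

theorem ConvexOn.sum_le_chord_zero {ι : Type*} (hφ : ConvexOn ℝ s φ) (h0 : 0 ∈ s) (hLs : L ∈ s)
    (hL : 0 < L) (t : Finset ι) {x : ι → ℝ} (hx : ∀ i ∈ t, x i ∈ Set.Icc 0 L) :
    ∑ i ∈ t, φ (x i) ≤ (∑ i ∈ t, x i) / L * φ L + (t.card - (∑ i ∈ t, x i) / L) * φ 0 := by
  calc ∑ i ∈ t, φ (x i) ≤ ∑ i ∈ t, (x i / L * φ L + (1 - x i / L) * φ 0) :=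
        Finset.sum_le_sum fun i hi => hφ.le_chord_zero h0 hLs hL (hx i hi)
    _ = _ := by
        simp only [Finset.sum_add_distrib, ← Finset.sum_mul, Finset.sum_div,
          Finset.sum_sub_distrib, Finset.sum_const, nsmul_eq_mul, mul_one]

end Chord

section Spectrum

variable {d : ℕ} {M : Matrix (Fin d) (Fin d) ℝ}

theorem trace_matFun (φ : ℝ → ℝ) (hM : M.IsHermitian) :
    (matFun φ M hM).trace = ∑ i, φ (hM.eigenvalues i) := by
  rw [matFun, trace_mul_cycle, Unitary.coe_star_mul_self, one_mul, trace_diagonal]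
  rfl

theorem eigenvalues_le_lamMax (hM : M.IsHermitian) (i : Fin d) : hM.eigenvalues i ≤ lamMax hM :=
  le_ciSup (Set.finite_range _).bddAbove i

theorem lamMax_pos (hM : M.PosSemidef) (hM0 : M ≠ 0) : 0 < lamMax hM.1 := by
  obtain ⟨i, hi⟩ := Function.ne_iff.mp (mt hM.1.eigenvalues_eq_zero_iff.mp hM0)
  exact (lt_of_le_of_ne (hM.eigenvalues_nonneg i) (Ne.symm hi)).trans_le
    (eigenvalues_le_lamMax hM.1 i)

end Spectrum

/-- **Intrinsic dimension bound.** For a nonzero positive semidefinite `Z` and convex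
`φ : ℝ → ℝ`, `trace φ(Z) ≤ intdim(Z)·φ(‖Z‖) + (d − intdim(Z))·φ(0)`, where
`intdim(Z) = trace(Z)/‖Z‖`. -/
theorem intdim_bound {d : ℕ} (Z : Matrix (Fin d) (Fin d) ℝ) (hZ : Z.PosSemidef)
    (hZ0 : Z ≠ 0) (φ : ℝ → ℝ) (hφ : ConvexOn ℝ Set.univ φ) :
    (matFun φ Z hZ.1).trace
      ≤ (Z.trace / lamMax hZ.1) * φ (lamMax hZ.1)
        + ((d : ℝ) - Z.trace / lamMax hZ.1) * φ 0 := by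
  have hspec : ∀ i ∈ Finset.univ, hZ.1.eigenvalues i ∈ Set.Icc 0 (lamMax hZ.1) :=
    fun i _ => ⟨hZ.eigenvalues_nonneg i, eigenvalues_le_lamMax hZ.1 i⟩
  rw [trace_matFun, hZ.1.trace_eq_sum_eigenvalues]
  simpa using hφ.sum_le_chord_zero trivial trivial (lamMax_pos hZ hZ0) Finset.univ hspec
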